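/- arXiv:2308.01456 — 3 statements merged into one kernel-verified Lean document; each statement's English description precedes it below -/
import Mathlib

section
/- Let (G, γ, b) be an RES-graph, let γ' be a shifting of γ, and let X ⊆ V(G) with b ∈ X. Then the flooding number ν̃(G, γ, b) is at most γ'(E(X)) + |δ(X)|/2 − odd_{γ'}(G − X). -/
open scoped Classical

namespace SignedFlood

variable {V E : Type} [Fintype V] [DecidableEq V] [Fintype E] [DecidableEq E]

/-- A circuit (closed trail) in a multigraph specified by `ends : E → Sym2 V`.
Darts are triples `(e, u, v)` meaning edge `e` traversed from `u` to `v`. -/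
structure Circuit {V E : Type} (ends : E → Sym2 V) where
  darts : List (E × V × V)
  nonempty : darts ≠ []
  valid : ∀ d ∈ darts, ends d.1 = s(d.2.1, d.2.2)
  chain : darts.Chain' (fun d d' => d.2.2 = d'.2.1)
  closed : darts.head?.map (fun d => d.2.1) = darts.getLast?.map (fun d => d.2.2)
  edgesNodup : (darts.map Prod.fst).Nodup

namespace Circuit

variable {ends : E → Sym2 V}

/-- The set of edges used by a circuit. -/
def edges (C : Circuit ends) : Finset E := (C.darts.map Prod.fst).toFinset

/-- The weight of a circuit: the sum in `ZMod 2` of the weights of its edges. -/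
def weight (γ : E → ZMod 2) (C : Circuit ends) : ZMod 2 :=
  ((C.darts.map Prod.fst).map γ).sum

/-- A circuit hits `b` if it has an edge (dart) incident to `b`. -/
def Hits (C : Circuit ends) (b : V) : Prop :=
  ∃ d ∈ C.darts, d.2.1 = b ∨ d.2.2 = b

/-- A circuit has `b` as its tail and head. -/
def BasedAt (C : Circuit ends) (b : V) : Prop :=
  C.darts.head?.map (fun d => d.2.1) = some b

end Circuit

/-- Degree of a vertex: loops count twice. -/
noncomputable def degree (ends : E → Sym2 V) (v : V) : ℕ :=
  ∑ e : E, (if ends e = s(v, v) then 2 else if v ∈ ends e then 1 else 0)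

/-- Adjacency via some edge. -/
def Adj (ends : E → Sym2 V) (u v : V) : Prop := ∃ e, ends e = s(u, v)

/-- The multigraph is connected. -/
def Connected (ends : E → Sym2 V) : Prop :=
  ∀ u v : V, Relation.ReflTransGen (Adj ends) u v

/-- Eulerian: connected with all degrees even. -/
def IsEulerian (ends : E → Sym2 V) : Prop :=
  Connected ends ∧ ∀ v : V, Even (degree ends v)

/-- A family of circuits whose edge sets partition the edge set. -/
def IsDecomposition (ends : E → Sym2 V) {k : ℕ} (C : Fin k → Circuit ends) : Prop :=
  ∀ e : E, ∃! i : Fin k, e ∈ (C i).edges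

/-- The flooding number: the maximum size of a circuit-decomposition where each
circuit is non-zero and hits `b` (`0` if there is no such decomposition). -/
noncomputable def floodingNumber (ends : E → Sym2 V) (γ : E → ZMod 2) (b : V) : ℕ :=
  sSup {k : ℕ | ∃ C : Fin k → Circuit ends, IsDecomposition ends C ∧
    ∀ i, (C i).weight γ = 1 ∧ (C i).Hits b}

/-- Shift a signature at a vertex `v`: add `1` to every non-loop edge incident to `v`. -/
noncomputable def shiftAt (ends : E → Sym2 V) (γ : E → ZMod 2) (v : V) : E → ZMod 2 :=
  fun e => γ e + (if v ∈ ends e ∧ ends e ≠ s(v, v) then 1 else 0)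

/-- `γ'` is a shifting of `γ`: obtained by a sequence of shifts at vertices. -/
noncomputable def IsShifting (ends : E → Sym2 V) (γ γ' : E → ZMod 2) : Prop :=
  ∃ l : List V, γ' = l.foldl (shiftAt ends) γ

/-- A pair crosses `X` if it has exactly one member in `X`. -/
def Crossing (X : Set V) (p : Sym2 V) : Prop :=
  ∃ u v, p = s(u, v) ∧ u ∈ X ∧ v ∉ X

/-- `δ(X)`: edges with exactly one end in `X`. -/
noncomputable def cutEdges (ends : E → Sym2 V) (X : Set V) : Finset E :=
  Finset.univ.filter (fun e => Crossing X (ends e))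

/-- `E(X)`: edges with both ends in `X`. -/
noncomputable def insideEdges (ends : E → Sym2 V) (X : Set V) : Finset E :=
  Finset.univ.filter (fun e => ∀ v ∈ ends e, v ∈ X)

/-- `E(Y) ∪ δ(Y)`: edges with at least one end in `Y`. -/
noncomputable def incidentEdges (ends : E → Sym2 V) (Y : Set V) : Finset E :=
  Finset.univ.filter (fun e => ∃ v ∈ ends e, v ∈ Y)

/-- The number of non-zero edges in `F` according to `γ`. -/
noncomputable def nzCount (γ : E → ZMod 2) (F : Finset E) : ℕ :=
  (F.filter (fun e => γ e = 1)).card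

/-- `Y` is `γ`-odd: parity of `γ(E(Y) ∪ δ(Y))` differs from parity of `|δ(Y)|/2`. -/
def OddSet (ends : E → Sym2 V) (γ : E → ZMod 2) (Y : Set V) : Prop :=
  nzCount γ (incidentEdges ends Y) % 2 ≠ ((cutEdges ends Y).card / 2) % 2

/-- The vertex set of the component of `G - X` containing `y`. -/
def compOf (ends : E → Sym2 V) (X : Set V) (y : V) : Set V :=
  {z | Relation.ReflTransGen
    (fun a c => (∃ e, ends e = s(a, c)) ∧ a ∉ X ∧ c ∉ X) y z}

/-- `Y` is the vertex set of a component of `G - X`. -/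
def IsCompOf (ends : E → Sym2 V) (X : Set V) (Y : Set V) : Prop :=
  ∃ y, y ∉ X ∧ Y = compOf ends X y

/-- The number of `γ`-odd components of `G - X`. -/
noncomputable def oddComponents (ends : E → Sym2 V) (γ : E → ZMod 2) (X : Set V) : ℕ :=
  Set.ncard {Y : Set V | IsCompOf ends X Y ∧ OddSet ends γ Y}

/-- A flooding: a circuit-decomposition into `deg(b)/2` circuits, each with `b`
as tail and head. -/
def IsFlooding (ends : E → Sym2 V) (b : V) {k : ℕ} (C : Fin k → Circuit ends) : Prop :=
  k = degree ends b / 2 ∧ IsDecomposition ends C ∧ ∀ i, (C i).BasedAt b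

/-- The number of non-zero circuits in a family of circuits. -/
noncomputable def nonzeroCount (ends : E → Sym2 V) (γ : E → ZMod 2) {k : ℕ}
    (C : Fin k → Circuit ends) : ℕ :=
  (Finset.univ.filter (fun i : Fin k => (C i).weight γ = 1)).card

/-- An optimal flooding maximizes the number of non-zero circuits. -/
def IsOptimalFlooding (ends : E → Sym2 V) (γ : E → ZMod 2) (b : V) {k : ℕ}
    (C : Fin k → Circuit ends) : Prop :=
  IsFlooding ends b C ∧ ∀ (k' : ℕ) (C' : Fin k' → Circuit ends),
    IsFlooding ends b C' → nonzeroCount ends γ C' ≤ nonzeroCount ends γ C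

end SignedFlood

/-!
Let `C₁, …, C_k` partition `E(G)` into non-zero circuits through `b`. A circuit crosses every cut
an even number of times; in particular it contains an even number of the edges flipped by a shift
at a vertex, so every `Cᵢ` is non-zero for `γ'` as well.

Call a component `Y` of `G - X` odd in a subgraph `F` when
`|F ∩ δ(Y)|/2 + γ'(F ∩ (E(Y) ∪ δ(Y)))` is odd (`oddity`). As the `Cᵢ` partition the edges and
meet every cut evenly, a `γ'`-odd component is odd in some `Cᵢ`. Fix a circuit `C` and let `M` be
the set of components odd in `C`. Each `Y ∈ M` meets `C`, and `C` passes through `b ∉ Y`, so `C`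
crosses `δ(Y)` at least twice; the cuts of the components partition `δ(X)`, hence
`|M| ≤ |C ∩ δ(X)|/2`. Adding up the oddities of all components and using that `C` is non-zero gives
`|C ∩ δ(X)|/2 + γ'(C ∩ E(X)) ≡ |M| + 1 (mod 2)`, so `|M| + 1 ≤ |C ∩ δ(X)|/2 + γ'(C ∩ E(X))`.
Summing over the circuits yields `k + odd_{γ'}(G - X) ≤ |δ(X)|/2 + γ'(E(X))`.

If there is no such partition, the claim reduces to `odd_{γ'}(G - X) ≤ |δ(X)|/2`, which holds
because in an Eulerian graph every component of `G - X` has a non-empty cut of even size.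
-/

namespace Finset

lemma natCast_sum_eq_card_filter_odd {ι : Type*} (s : Finset ι) (p : ι → ℕ) :
    ((∑ i ∈ s, p i : ℕ) : ZMod 2) = (s.filter fun i => Odd (p i)).card := by
  rw [card_filter]
  push_cast
  refine sum_congr rfl fun i _ => ?_
  split_ifs with h
  · exact ZMod.natCast_eq_one_iff_odd.mpr h
  · exact ZMod.natCast_eq_zero_iff_even.mpr (Nat.not_odd_iff_even.mp h)

lemma sum_nat_div_of_dvd {ι : Type*} (s : Finset ι) (c : ι → ℕ) {n : ℕ}
    (h : ∀ i ∈ s, n ∣ c i) : ∑ i ∈ s, c i / n = (∑ i ∈ s, c i) / n := by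
  rcases Nat.eq_zero_or_pos n with rfl | hn
  · simp
  refine (Nat.div_eq_of_eq_mul_left hn ?_).symm
  rw [sum_mul]
  exact sum_congr rfl fun i hi => (Nat.div_mul_cancel (h i hi)).symm

lemma sum_sum_eq_sum_of_existsUnique {ι α M : Type*} [AddCommMonoid M] {s : Finset ι}
    {A : ι → Finset α} {F : Finset α} (g : α → M) (hsub : ∀ i ∈ s, A i ⊆ F)
    (huniq : ∀ a ∈ F, ∃! i, i ∈ s ∧ a ∈ A i) :
    ∑ i ∈ s, ∑ a ∈ A i, g a = ∑ a ∈ F, g a := by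
  classical
  have hA : ∀ i ∈ s, ∑ a ∈ A i, g a = ∑ a ∈ F, if a ∈ A i then g a else 0 := fun i hi => by
    rw [sum_ite_mem, inter_eq_right.mpr (hsub i hi)]
  rw [sum_congr rfl hA, sum_comm]
  refine sum_congr rfl fun a ha => ?_
  obtain ⟨i, ⟨hi, hai⟩, hunique⟩ := huniq a ha
  rw [sum_eq_single_of_mem i hi fun j hj hji => if_neg fun haj => hji (hunique j ⟨hj, haj⟩),
    if_pos hai]

lemma sum_card_eq_card_of_existsUnique {ι α : Type*} {s : Finset ι} {A : ι → Finset α}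
    {F : Finset α} (hsub : ∀ i ∈ s, A i ⊆ F) (huniq : ∀ a ∈ F, ∃! i, i ∈ s ∧ a ∈ A i) :
    ∑ i ∈ s, (A i).card = F.card := by
  simpa only [card_eq_sum_ones] using sum_sum_eq_sum_of_existsUnique (fun _ => 1) hsub huniq

end Finset

namespace List.IsChain

variable {α β : Type*} {s t : α → β}

lemma sum_map_sub {M : Type*} [AddCommGroup M] (f : β → M) :
    ∀ {l : List α}, l.IsChain (fun a a' => t a = s a') → ∀ (hl : l ≠ []),
      (l.map fun a => f (t a) - f (s a)).sum = f (t (l.getLast hl)) - f (s (l.head hl))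
  | [], _, hl => absurd rfl hl
  | [a], _, _ => by simp
  | a :: a' :: l, h, _ => by
    obtain ⟨haa', h'⟩ := isChain_cons_cons.mp h
    rw [map_cons, sum_cons, sum_map_sub f h' (cons_ne_nil _ _), getLast_cons (cons_ne_nil _ _),
      head_cons, head_cons, ← haa']
    abel

lemma iff_head {P : β → Prop} {l : List α} (hc : l.IsChain fun a a' => t a = s a')
    (hl : l ≠ []) (hP : ∀ a ∈ l, (P (s a) ↔ P (t a))) :
    ∀ a ∈ l, (P (s a) ↔ P (s (l.head hl))) := by
  refine IsChain.induction (fun a => P (s a) ↔ P (s (l.head hl))) l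
    (hc.imp_of_mem_imp (S := fun a a' => a ∈ l ∧ t a = s a') fun a _ ha _ h => ⟨ha, h⟩)
    ?_ fun _ => Iff.rfl
  rintro a a' ⟨ha, haa'⟩ hpa
  rw [← haa']
  exact (hP a ha).symm.trans hpa

end List.IsChain

namespace SignedFlood

variable {V E : Type}

section

variable {ends : E → Sym2 V}

section Crossing

lemma crossing_mk_iff (S : Set V) (u v : V) :
    Crossing S s(u, v) ↔ (u ∈ S ∧ v ∉ S) ∨ (v ∈ S ∧ u ∉ S) := by
  constructor
  · rintro ⟨a, c, heq, ha, hc⟩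
    rcases Sym2.eq_iff.mp heq with ⟨rfl, rfl⟩ | ⟨rfl, rfl⟩
    · exact Or.inl ⟨ha, hc⟩
    · exact Or.inr ⟨ha, hc⟩
  · rintro (⟨hu, hv⟩ | ⟨hv, hu⟩)
    · exact ⟨u, v, rfl, hu, hv⟩
    · exact ⟨v, u, Sym2.eq_swap, hv, hu⟩

lemma ite_crossing_mk_eq_add (S : Set V) (u v : V) :
    (if Crossing S s(u, v) then (1 : ZMod 2) else 0)
      = (if u ∈ S then 1 else 0) + (if v ∈ S then 1 else 0) := by
  by_cases hu : u ∈ S <;> by_cases hv : v ∈ S <;> simp [crossing_mk_iff, hu, hv]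
  decide

lemma crossing_singleton_iff (v : V) (p : Sym2 V) :
    Crossing {v} p ↔ v ∈ p ∧ p ≠ s(v, v) := by
  induction p using Sym2.ind with
  | _ a c =>
    rw [crossing_mk_iff, Sym2.mem_iff, Ne, Sym2.eq_iff]
    simp only [Set.mem_singleton_iff]
    constructor
    · rintro (⟨rfl, h⟩ | ⟨rfl, h⟩) <;> tauto
    · rintro ⟨rfl | rfl, h⟩ <;> tauto

end Crossing

lemma nzCount_eq_sum (γ : E → ZMod 2) (F : Finset E) :
    nzCount γ F = ∑ e ∈ F, if γ e = 1 then 1 else 0 :=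
  Finset.card_filter _ _

lemma natCast_nzCount (γ : E → ZMod 2) (F : Finset E) :
    (nzCount γ F : ZMod 2) = ∑ e ∈ F, γ e := by
  rw [nzCount_eq_sum]
  push_cast
  refine Finset.sum_congr rfl fun e _ => ?_
  rcases (by decide : ∀ x : ZMod 2, x = 0 ∨ x = 1) (γ e) with h | h <;> simp [h]

section EdgeSets

variable [Fintype E]

@[simp] lemma mem_cutEdges {S : Set V} {e : E} :
    e ∈ cutEdges ends S ↔ Crossing S (ends e) := by
  simp [cutEdges]

variable [Fintype V] [DecidableEq V]

@[simp] lemma mem_insideEdges {X : Set V} {e : E} :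
    e ∈ insideEdges ends X ↔ ∀ v ∈ ends e, v ∈ X := by
  simp [insideEdges]

@[simp] lemma mem_incidentEdges {Y : Set V} {e : E} :
    e ∈ incidentEdges ends Y ↔ ∃ v ∈ ends e, v ∈ Y := by
  simp [incidentEdges]

lemma cutEdges_subset_incidentEdges (Y : Set V) :
    cutEdges ends Y ⊆ incidentEdges ends Y := by
  intro e he
  obtain ⟨u, w, hew, hu, -⟩ := mem_cutEdges.mp he
  exact mem_incidentEdges.mpr ⟨u, hew ▸ Sym2.mem_mk_left u w, hu⟩

end EdgeSets

namespace Circuit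

variable (C : Circuit ends)

lemma sum_map_sub_eq_zero {M : Type*} [AddCommGroup M] (f : V → M) :
    (C.darts.map fun d => f d.2.2 - f d.2.1).sum = 0 := by
  have hclosed := C.closed
  rw [List.head?_eq_some_head C.nonempty, List.getLast?_eq_some_getLast C.nonempty,
    Option.map_some, Option.map_some, Option.some_inj] at hclosed
  rw [List.IsChain.sum_map_sub f C.chain C.nonempty, ← hclosed, sub_self]

variable [DecidableEq E]

lemma mem_edges {e : E} : e ∈ C.edges ↔ ∃ d ∈ C.darts, d.1 = e := by
  simp [edges]

lemma sum_edges {M : Type*} [AddCommMonoid M] (g : E → M) :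
    ∑ e ∈ C.edges, g e = (C.darts.map fun d => g d.1).sum := by
  rw [edges, List.sum_toFinset _ C.edgesNodup, List.map_map]
  rfl

lemma weight_eq_sum (γ : E → ZMod 2) : C.weight γ = ∑ e ∈ C.edges, γ e := by
  rw [sum_edges, weight, List.map_map]
  rfl

lemma sum_ite_crossing_eq_zero (S : Set V) :
    ∑ e ∈ C.edges, (if Crossing S (ends e) then (1 : ZMod 2) else 0) = 0 := by
  rw [sum_edges]
  refine (congrArg List.sum (List.map_congr_left fun d hd => ?_)).trans
    (C.sum_map_sub_eq_zero fun v => if v ∈ S then (1 : ZMod 2) else 0)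
  rw [C.valid d hd, ite_crossing_mk_eq_add, CharTwo.sub_eq_add, add_comm]

lemma weight_shiftAt [DecidableEq V] (γ : E → ZMod 2) (v : V) :
    C.weight (shiftAt ends γ v) = C.weight γ := by
  simp only [weight_eq_sum, shiftAt, Finset.sum_add_distrib, ← crossing_singleton_iff,
    C.sum_ite_crossing_eq_zero, add_zero]

lemma weight_eq_of_isShifting [DecidableEq V] {γ γ' : E → ZMod 2} (h : IsShifting ends γ γ') :
    C.weight γ' = C.weight γ := by
  obtain ⟨l, rfl⟩ := h
  induction l generalizing γ with
  | nil => rfl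
  | cons v l ih => rw [List.foldl_cons, ih, weight_shiftAt]

variable [Fintype E]

lemma even_card_inter_cutEdges (S : Set V) : Even (C.edges ∩ cutEdges ends S).card := by
  rw [← ZMod.natCast_eq_zero_iff_even, Finset.inter_comm, cutEdges, Finset.filter_inter,
    Finset.univ_inter, Finset.card_filter]
  push_cast
  exact C.sum_ite_crossing_eq_zero S

lemma inter_cutEdges_nonempty {S : Set V} (hin : ∃ d ∈ C.darts, d.2.1 ∈ S ∨ d.2.2 ∈ S)
    (hout : ∃ d ∈ C.darts, d.2.1 ∉ S ∨ d.2.2 ∉ S) : (C.edges ∩ cutEdges ends S).Nonempty := by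
  by_contra hempty
  have hside : ∀ d ∈ C.darts, (d.2.1 ∈ S ↔ d.2.2 ∈ S) := fun d hd => by
    have hd' : d.1 ∉ cutEdges ends S := fun hcut =>
      hempty ⟨d.1, Finset.mem_inter.mpr ⟨C.mem_edges.mpr ⟨d, hd, rfl⟩, hcut⟩⟩
    rw [mem_cutEdges, C.valid d hd, crossing_mk_iff] at hd'
    tauto
  have hhead := List.IsChain.iff_head C.chain C.nonempty hside
  obtain ⟨d, hd, hdS⟩ := hin
  obtain ⟨d', hd', hd'S⟩ := hout
  rw [← hside d hd, or_self] at hdS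
  rw [← hside d' hd', or_self] at hd'S
  exact hd'S ((hhead d' hd').mpr ((hhead d hd).mp hdS))

end Circuit

namespace IsDecomposition

variable [DecidableEq E] {k : ℕ} {C : Fin k → Circuit ends} (hdec : IsDecomposition ends C)
include hdec

lemma sum_sum_inter {M : Type*} [AddCommMonoid M] (F : Finset E) (g : E → M) :
    ∑ i, ∑ e ∈ (C i).edges ∩ F, g e = ∑ e ∈ F, g e :=
  Finset.sum_sum_eq_sum_of_existsUnique g (fun _ _ => Finset.inter_subset_right) fun e he => by
    simpa [he] using hdec e

lemma sum_card_inter (F : Finset E) : ∑ i, ((C i).edges ∩ F).card = F.card := by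
  simpa only [Finset.card_eq_sum_ones] using hdec.sum_sum_inter F fun _ => 1

lemma sum_nzCount_inter (γ : E → ZMod 2) (F : Finset E) :
    ∑ i, nzCount γ ((C i).edges ∩ F) = nzCount γ F := by
  simpa only [nzCount_eq_sum] using hdec.sum_sum_inter F _

variable [Fintype E]

lemma sum_half_card_inter_cutEdges (S : Set V) :
    ∑ i, ((C i).edges ∩ cutEdges ends S).card / 2 = (cutEdges ends S).card / 2 := by
  rw [Finset.sum_nat_div_of_dvd _ _ fun i _ => (C i).even_card_inter_cutEdges S |>.two_dvd,
    hdec.sum_card_inter]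

end IsDecomposition

section Components

variable {X : Set V}

lemma mem_compOf_self (y : V) : y ∈ compOf ends X y := Relation.ReflTransGen.refl

lemma notMem_of_mem_compOf {y z : V} (hy : y ∉ X) (hz : z ∈ compOf ends X y) : z ∉ X := by
  rcases Relation.ReflTransGen.cases_tail hz with rfl | ⟨_, _, -, -, hz⟩
  exacts [hy, hz]

lemma mem_compOf_of_edge {y a c : V} {e : E} (hy : y ∉ X) (ha : a ∈ compOf ends X y)
    (he : ends e = s(a, c)) (hc : c ∉ X) : c ∈ compOf ends X y :=
  ha.tail ⟨⟨e, he⟩, notMem_of_mem_compOf hy ha, hc⟩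

lemma compOf_eq_of_mem {y z : V} (hz : z ∈ compOf ends X y) :
    compOf ends X z = compOf ends X y := by
  have : Std.Symm fun a c : V => (∃ e, ends e = s(a, c)) ∧ a ∉ X ∧ c ∉ X :=
    ⟨fun _ _ ⟨⟨e, he⟩, ha, hc⟩ => ⟨⟨e, he.trans Sym2.eq_swap⟩, hc, ha⟩⟩
  exact Set.ext fun _ => ⟨hz.trans, (Relation.ReflTransGen.stdSymm.symm _ _ hz).trans⟩

lemma exists_crossing_of_reflTransGen {S : Set V} {u w : V}
    (h : Relation.ReflTransGen (Adj ends) u w) (hu : u ∈ S) (hw : w ∉ S) :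
    ∃ e, Crossing S (ends e) := by
  induction h with
  | refl => exact absurd hu hw
  | @tail c w _ hcw ih =>
    by_cases hc : c ∈ S
    · obtain ⟨e, he⟩ := hcw
      exact ⟨e, he ▸ (crossing_mk_iff S c w).mpr (Or.inl ⟨hc, hw⟩)⟩
    · exact ih hc

section

variable [Fintype V]

noncomputable def components (ends : E → Sym2 V) (X : Set V) : Finset (Set V) :=
  Finset.univ.filter (IsCompOf ends X)

lemma mem_components {Y : Set V} : Y ∈ components ends X ↔ IsCompOf ends X Y := by
  simp [components]

end

namespace IsCompOf

variable {Y : Set V} (hY : IsCompOf ends X Y)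
include hY

lemma notMem {v : V} (hv : v ∈ Y) : v ∉ X := by
  obtain ⟨y, hy, rfl⟩ := hY
  exact notMem_of_mem_compOf hy hv

lemma eq_compOf {v : V} (hv : v ∈ Y) : Y = compOf ends X v := by
  obtain ⟨y, -, rfl⟩ := hY
  exact (compOf_eq_of_mem hv).symm

lemma mem_of_edge {a c : V} {e : E} (ha : a ∈ Y) (he : ends e = s(a, c)) (hc : c ∉ X) :
    c ∈ Y := by
  rw [hY.eq_compOf ha]
  exact mem_compOf_of_edge (hY.notMem ha) (mem_compOf_self a) he hc

variable [Fintype E]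

lemma cutEdges_subset : cutEdges ends Y ⊆ cutEdges ends X := by
  intro e he
  obtain ⟨p, q, hpq, hp, hq⟩ := mem_cutEdges.mp he
  have hqX : q ∈ X := by_contra fun hqX => hq (hY.mem_of_edge hp hpq hqX)
  exact mem_cutEdges.mpr ⟨q, p, hpq.trans Sym2.eq_swap, hqX, hY.notMem hp⟩

lemma cutEdges_nonempty (hconn : Connected ends) {b : V} (hb : b ∈ X) :
    (cutEdges ends Y).Nonempty := by
  obtain ⟨y, hy, rfl⟩ := hY
  obtain ⟨e, he⟩ := exists_crossing_of_reflTransGen (hconn y b)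
    (mem_compOf_self (ends := ends) (X := X) y) fun hbY => notMem_of_mem_compOf hy hbY hb
  exact ⟨e, mem_cutEdges.mpr he⟩

variable [Fintype V] [DecidableEq V]

lemma eq_of_mem_incidentEdges {Y' : Set V} (hY' : IsCompOf ends X Y') {e : E}
    (he : e ∈ incidentEdges ends Y) (he' : e ∈ incidentEdges ends Y') : Y = Y' := by
  obtain ⟨v, hve, hv⟩ := mem_incidentEdges.mp he
  obtain ⟨v', hv'e, hv'⟩ := mem_incidentEdges.mp he'
  have hv'Y : v' ∈ Y := by
    rcases eq_or_ne v v' with rfl | hne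
    · exact hv
    · exact hY.mem_of_edge hv ((Sym2.mem_and_mem_iff hne).mp ⟨hve, hv'e⟩) (hY'.notMem hv')
  rw [hY.eq_compOf hv'Y, hY'.eq_compOf hv']

lemma notMem_insideEdges {e : E} (he : e ∈ incidentEdges ends Y) : e ∉ insideEdges ends X := by
  obtain ⟨v, hve, hv⟩ := mem_incidentEdges.mp he
  exact fun hin => hY.notMem hv (mem_insideEdges.mp hin v hve)

end IsCompOf

variable [Fintype V] [DecidableEq V] [Fintype E]

lemma existsUnique_isCompOf_mem_cutEdges {e : E} (he : e ∈ cutEdges ends X) :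
    ∃! Y, IsCompOf ends X Y ∧ e ∈ cutEdges ends Y := by
  obtain ⟨u, y, hey, hu, hy⟩ := mem_cutEdges.mp he
  have hyY : e ∈ cutEdges ends (compOf ends X y) := mem_cutEdges.mpr
    ⟨y, u, hey.trans Sym2.eq_swap, mem_compOf_self y, fun hu' => notMem_of_mem_compOf hy hu' hu⟩
  exact ⟨compOf ends X y, ⟨⟨y, hy, rfl⟩, hyY⟩, fun Y ⟨hYc, heY⟩ =>
    hYc.eq_of_mem_incidentEdges ⟨y, hy, rfl⟩ (cutEdges_subset_incidentEdges Y heY)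
      (cutEdges_subset_incidentEdges _ hyY)⟩

lemma existsUnique_isCompOf_mem_incidentEdges {e : E} (he : e ∉ insideEdges ends X) :
    ∃! Y, IsCompOf ends X Y ∧ e ∈ incidentEdges ends Y := by
  obtain ⟨v, hve, hv⟩ : ∃ v ∈ ends e, v ∉ X := by simpa using he
  have hinc : e ∈ incidentEdges ends (compOf ends X v) :=
    mem_incidentEdges.mpr ⟨v, hve, mem_compOf_self v⟩
  exact ⟨compOf ends X v, ⟨⟨v, hv, rfl⟩, hinc⟩,
    fun Y ⟨hYc, heY⟩ => hYc.eq_of_mem_incidentEdges ⟨v, hv, rfl⟩ heY hinc⟩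

lemma oddComponents_eq_card_filter (γ : E → ZMod 2) :
    oddComponents ends γ X = ((components ends X).filter (OddSet ends γ)).card := by
  rw [oddComponents, Set.ncard_eq_toFinset_card', Set.toFinset_ofPred, components,
    Finset.filter_filter]

variable [DecidableEq E]

lemma sum_card_inter_cutEdges_components (F : Finset E) :
    ∑ Y ∈ components ends X, (F ∩ cutEdges ends Y).card = (F ∩ cutEdges ends X).card := by
  refine Finset.sum_card_eq_card_of_existsUnique
    (fun Y hY => Finset.inter_subset_inter subset_rfl (mem_components.mp hY).cutEdges_subset)
    fun e he => ?_
  obtain ⟨hF, hX⟩ := Finset.mem_inter.mp he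
  simpa [mem_components, hF] using existsUnique_isCompOf_mem_cutEdges hX

lemma sum_nzCount_inter_incidentEdges_components (γ : E → ZMod 2) (F : Finset E) :
    ∑ Y ∈ components ends X, nzCount γ (F ∩ incidentEdges ends Y)
      = nzCount γ (F \ insideEdges ends X) := by
  simp only [nzCount_eq_sum]
  refine Finset.sum_sum_eq_sum_of_existsUnique _ (fun Y hY e he => ?_) fun e he => ?_
  · obtain ⟨hF, hinc⟩ := Finset.mem_inter.mp he
    exact Finset.mem_sdiff.mpr ⟨hF, (mem_components.mp hY).notMem_insideEdges hinc⟩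
  · obtain ⟨hF, hX⟩ := Finset.mem_sdiff.mp he
    simpa [mem_components, hF] using existsUnique_isCompOf_mem_incidentEdges hX

end Components

section Handshake

variable [DecidableEq V]

-- A loop contributes `2 = 1 + 1`, so modulo 2 every edge contributes once for each of its ends.
lemma degree_summand_eq_add (a c v : V) :
    (if s(a, c) = s(v, v) then (2 : ZMod 2) else if v ∈ s(a, c) then 1 else 0)
      = (if a = v then 1 else 0) + (if c = v then 1 else 0) := by
  by_cases ha : a = v <;> by_cases hc : c = v <;> subst_vars <;> simp [*, eq_comm]
  decide

variable [Fintype V] [Fintype E]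

lemma natCast_card_cutEdges (W : Set V) :
    ((cutEdges ends W).card : ZMod 2)
      = ∑ v ∈ Finset.univ.filter (· ∈ W), (degree ends v : ZMod 2) := by
  rw [cutEdges, Finset.card_filter]
  simp only [degree, Nat.cast_sum]
  rw [Finset.sum_comm]
  push_cast
  refine Finset.sum_congr rfl fun e _ => ?_
  generalize ends e = p
  induction p using Sym2.ind with
  | _ a c =>
    simp only [degree_summand_eq_add, Finset.sum_add_distrib, Finset.sum_ite_eq, Finset.mem_filter,
      Finset.mem_univ, true_and, ite_crossing_mk_eq_add]

lemma even_card_cutEdges (hdeg : ∀ v, Even (degree ends v)) (W : Set V) :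
    Even (cutEdges ends W).card := by
  rw [← ZMod.natCast_eq_zero_iff_even, natCast_card_cutEdges]
  exact Finset.sum_eq_zero fun v _ => ZMod.natCast_eq_zero_iff_even.mpr (hdeg v)

lemma oddComponents_le_half_card_cutEdges (hE : IsEulerian ends) {b : V} {X : Set V}
    (hb : b ∈ X) (γ : E → ZMod 2) : oddComponents ends γ X ≤ (cutEdges ends X).card / 2 := by
  have hpos : ∀ Y ∈ components ends X, 1 ≤ (cutEdges ends Y).card / 2 := fun Y hY => by
    have heven := Nat.even_iff.mp (even_card_cutEdges hE.2 Y)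
    have hne := ((mem_components.mp hY).cutEdges_nonempty hE.1 hb).card_pos
    omega
  calc oddComponents ends γ X = ((components ends X).filter (OddSet ends γ)).card :=
        oddComponents_eq_card_filter γ
    _ ≤ (components ends X).card := Finset.card_filter_le _ _
    _ ≤ ∑ Y ∈ components ends X, (cutEdges ends Y).card / 2 := by
        rw [Finset.card_eq_sum_ones]
        exact Finset.sum_le_sum hpos
    _ = (∑ Y ∈ components ends X, (cutEdges ends Y).card) / 2 :=
        Finset.sum_nat_div_of_dvd _ _ fun Y _ => (even_card_cutEdges hE.2 Y).two_dvd
    _ = (cutEdges ends X).card / 2 := by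
        simpa using congrArg (· / 2) (sum_card_inter_cutEdges_components (X := X) Finset.univ)

end Handshake

section Oddity

variable [Fintype V] [DecidableEq V] [Fintype E] [DecidableEq E]

noncomputable def oddity (ends : E → Sym2 V) (γ : E → ZMod 2) (F : Finset E) (Y : Set V) : ℕ :=
  (F ∩ cutEdges ends Y).card / 2 + nzCount γ (F ∩ incidentEdges ends Y)

lemma oddSet_iff_odd_oddity (γ : E → ZMod 2) (Y : Set V) :
    OddSet ends γ Y ↔ Odd (oddity ends γ Finset.univ Y) := by
  simp only [OddSet, oddity, Finset.univ_inter, Nat.odd_iff]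
  omega

lemma IsDecomposition.exists_odd_oddity {k : ℕ} {C : Fin k → Circuit ends}
    (hdec : IsDecomposition ends C) {γ : E → ZMod 2} {Y : Set V} (hY : OddSet ends γ Y) :
    ∃ i, Odd (oddity ends γ (C i).edges Y) := by
  have hsum : ∑ i, oddity ends γ (C i).edges Y = oddity ends γ Finset.univ Y := by
    simp only [oddity, Finset.sum_add_distrib, Finset.univ_inter,
      hdec.sum_half_card_inter_cutEdges, hdec.sum_nzCount_inter]
  by_contra! heven
  rw [oddSet_iff_odd_oddity, ← hsum] at hY
  exact Nat.not_odd_iff_even.mpr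
    (Finset.even_sum _ fun i _ => Nat.not_odd_iff_even.mp (heven i)) hY

namespace Circuit

variable (C : Circuit ends) {γ : E → ZMod 2} {X : Set V}

lemma sum_oddity_components :
    ∑ Y ∈ components ends X, oddity ends γ C.edges Y
      = (C.edges ∩ cutEdges ends X).card / 2 + nzCount γ (C.edges \ insideEdges ends X) := by
  simp only [oddity, Finset.sum_add_distrib]
  rw [Finset.sum_nat_div_of_dvd _ _ fun Y _ => (C.even_card_inter_cutEdges Y).two_dvd,
    sum_card_inter_cutEdges_components, sum_nzCount_inter_incidentEdges_components]

lemma one_le_half_card_inter_cutEdges {b : V} (hb : b ∈ X) (hits : C.Hits b) {Y : Set V}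
    (hY : IsCompOf ends X Y) (hodd : Odd (oddity ends γ C.edges Y)) :
    1 ≤ (C.edges ∩ cutEdges ends Y).card / 2 := by
  obtain ⟨e, he⟩ : (C.edges ∩ incidentEdges ends Y).Nonempty := by
    by_contra hempty
    rw [Finset.not_nonempty_iff_eq_empty] at hempty
    have hcut : C.edges ∩ cutEdges ends Y = ∅ := Finset.subset_empty.mp
      (hempty ▸ Finset.inter_subset_inter subset_rfl (cutEdges_subset_incidentEdges Y))
    simp [oddity, hcut, hempty, nzCount] at hodd
  obtain ⟨heC, heY⟩ := Finset.mem_inter.mp he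
  obtain ⟨d, hd, rfl⟩ := C.mem_edges.mp heC
  obtain ⟨v, hv, hvY⟩ := mem_incidentEdges.mp heY
  rw [C.valid d hd, Sym2.mem_iff] at hv
  obtain ⟨d', hd', hd'b⟩ := hits
  have hbY : b ∉ Y := fun hbY => hY.notMem hbY hb
  have hcross := C.inter_cutEdges_nonempty ⟨d, hd, hv.imp (· ▸ hvY) (· ▸ hvY)⟩
    ⟨d', hd', hd'b.imp (· ▸ hbY) (· ▸ hbY)⟩
  have heven := Nat.even_iff.mp (C.even_card_inter_cutEdges Y)
  have hpos := hcross.card_pos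
  omega

lemma card_filter_odd_oddity_add_one_le {b : V} (hb : b ∈ X) (hw : C.weight γ = 1)
    (hits : C.Hits b) :
    ((components ends X).filter fun Y => Odd (oddity ends γ C.edges Y)).card + 1
      ≤ (C.edges ∩ cutEdges ends X).card / 2 + nzCount γ (C.edges ∩ insideEdges ends X) := by
  set M := (components ends X).filter fun Y => Odd (oddity ends γ C.edges Y)
  set h := (C.edges ∩ cutEdges ends X).card / 2
  set n := nzCount γ (C.edges ∩ insideEdges ends X)
  set n' := nzCount γ (C.edges \ insideEdges ends X)
  have hle : M.card ≤ h := calc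
    M.card ≤ ∑ Y ∈ M, (C.edges ∩ cutEdges ends Y).card / 2 := by
        rw [Finset.card_eq_sum_ones]
        refine Finset.sum_le_sum fun Y hY => ?_
        obtain ⟨hYc, hodd⟩ := Finset.mem_filter.mp hY
        exact C.one_le_half_card_inter_cutEdges hb hits (mem_components.mp hYc) hodd
    _ ≤ ∑ Y ∈ components ends X, (C.edges ∩ cutEdges ends Y).card / 2 :=
        Finset.sum_le_sum_of_subset (Finset.filter_subset _ _)
    _ = h := by
        rw [Finset.sum_nat_div_of_dvd _ _ fun Y _ => (C.even_card_inter_cutEdges Y).two_dvd,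
          sum_card_inter_cutEdges_components]
  have hM : (M.card : ZMod 2) = h + n' := by
    rw [← Finset.natCast_sum_eq_card_filter_odd, C.sum_oddity_components]
    push_cast
    rfl
  have hn : (n : ZMod 2) + n' = 1 := by
    rw [natCast_nzCount, natCast_nzCount, Finset.sum_inter_add_sum_sdiff, ← C.weight_eq_sum, hw]
  have hparity : ((h + n : ℕ) : ZMod 2) = M.card + 1 := by
    push_cast
    linear_combination hn - hM - (n' : ZMod 2) * CharTwo.two_eq_zero (R := ZMod 2)
  have hne : h + n ≠ M.card := fun heq => by
    rw [heq] at hparity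
    simp at hparity
  omega

end Circuit

lemma IsDecomposition.add_oddComponents_le {k : ℕ} {C : Fin k → Circuit ends}
    (hdec : IsDecomposition ends C) {γ : E → ZMod 2} {b : V} {X : Set V} (hb : b ∈ X)
    (hw : ∀ i, (C i).weight γ = 1) (hits : ∀ i, (C i).Hits b) :
    k + oddComponents ends γ X ≤ (cutEdges ends X).card / 2 + nzCount γ (insideEdges ends X) := by
  let M i := (components ends X).filter fun Y => Odd (oddity ends γ (C i).edges Y)
  have hodd : oddComponents ends γ X ≤ ∑ i, (M i).card := by
    rw [oddComponents_eq_card_filter]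
    refine (Finset.card_le_card fun Y hY => ?_).trans Finset.card_biUnion_le
    obtain ⟨hYc, hYodd⟩ := Finset.mem_filter.mp hY
    obtain ⟨i, hi⟩ := hdec.exists_odd_oddity hYodd
    exact Finset.mem_biUnion.mpr ⟨i, Finset.mem_univ i, Finset.mem_filter.mpr ⟨hYc, hi⟩⟩
  have hcircuits : ∑ i, ((M i).card + 1) ≤ ∑ i, (((C i).edges ∩ cutEdges ends X).card / 2
      + nzCount γ ((C i).edges ∩ insideEdges ends X)) :=
    Finset.sum_le_sum fun i _ => (C i).card_filter_odd_oddity_add_one_le hb (hw i) (hits i)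
  rw [Finset.sum_add_distrib, Finset.sum_add_distrib, hdec.sum_half_card_inter_cutEdges,
    hdec.sum_nzCount_inter] at hcircuits
  simp only [Finset.sum_const, Finset.card_univ, Fintype.card_fin, smul_eq_mul, mul_one]
    at hcircuits
  omega

end Oddity

end

variable [Fintype V] [DecidableEq V] [Fintype E] [DecidableEq E]

/-- the easy direction of the min-max theorem. -/
theorem flooding_upper_bound (ends : E → Sym2 V) (γ γ' : E → ZMod 2) (b : V)
    (hE : IsEulerian ends) (hsh : IsShifting ends γ γ')
    (X : Set V) (hb : b ∈ X) :
    (floodingNumber ends γ b : ℤ) ≤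
      (nzCount γ' (insideEdges ends X) : ℤ) + ((cutEdges ends X).card / 2 : ℕ)
        - (oddComponents ends γ' X : ℤ) := by
  have hodd := oddComponents_le_half_card_cutEdges hE hb γ'
  have hsup : floodingNumber ends γ b ≤ (cutEdges ends X).card / 2
      + nzCount γ' (insideEdges ends X) - oddComponents ends γ' X :=
    csSup_le' fun k ⟨C, hdec, hC⟩ => by
      have := hdec.add_oddComponents_le hb
        (fun i => ((C i).weight_eq_of_isShifting hsh).trans (hC i).1) fun i => (hC i).2
      omega
  omega

end SignedFlood
end

section
/- Let (G, γ, b) be an RES-graph, and suppose an optimal flooding C contains at least one non-zero circuit. Then there exists a partition of E(G) into circuits, each non-zero and hitting b, whose size equals the number of non-zero circuits in C. (Each zero circuit of a flooding can be merged into a non-zero circuit at the root b.) -/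
open scoped Classical

/-!
Every circuit of a flooding starts and ends at `b`, so any edge-disjoint family of them can be
concatenated into a single circuit through `b`, of weight the sum of their weights. Appending all
zero circuits to one fixed non-zero circuit and keeping the other non-zero circuits as they are
gives a decomposition into as many circuits as there are non-zero ones, each of weight `1`.
-/

namespace SignedFlood

variable {V E : Type} {ends : E → Sym2 V} {b : V}

namespace Circuit

lemma BasedAt.getLast?_map_snd {C : Circuit ends} (h : C.BasedAt b) :
    C.darts.getLast?.map (fun d => d.2.2) = some b :=
  C.closed ▸ h

lemma BasedAt.hits {C : Circuit ends} (h : C.BasedAt b) : C.Hits b := by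
  obtain ⟨d, hd, hdb⟩ := Option.map_eq_some_iff.mp h
  exact ⟨d, List.mem_of_mem_head? hd, Or.inl hdb⟩

end Circuit

section Join

lemma flatten_darts_ne_nil {L : List (Circuit ends)} (hL : L ≠ []) :
    (L.map Circuit.darts).flatten ≠ [] := by
  obtain ⟨c, L', rfl⟩ := List.exists_cons_of_ne_nil hL
  simpa using fun h => absurd h c.nonempty

lemma head?_flatten_darts {L : List (Circuit ends)} (hL : L ≠ [])
    (hb : ∀ c ∈ L, c.BasedAt b) :
    ((L.map Circuit.darts).flatten).head?.map (fun d => d.2.1) = some b := by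
  obtain ⟨c, L', rfl⟩ := List.exists_cons_of_ne_nil hL
  obtain ⟨d, hd, hdb⟩ := Option.map_eq_some_iff.mp (hb c List.mem_cons_self)
  simp [List.head?_append, hd, hdb]

lemma getLast?_flatten_darts {L : List (Circuit ends)} (hL : L ≠ [])
    (hb : ∀ c ∈ L, c.BasedAt b) :
    ((L.map Circuit.darts).flatten).getLast?.map (fun d => d.2.2) = some b := by
  induction L with
  | nil => exact absurd rfl hL
  | cons c L' ih =>
    simp only [List.map_cons, List.flatten_cons, List.getLast?_append]
    rcases eq_or_ne L' [] with rfl | hL'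
    · simpa using (hb c List.mem_cons_self).getLast?_map_snd
    · obtain ⟨d, hd, hdb⟩ := Option.map_eq_some_iff.mp
        (ih hL' fun c hc => hb c (List.mem_cons_of_mem _ hc))
      simp [hd, hdb]

lemma isChain_flatten_darts {L : List (Circuit ends)} (hb : ∀ c ∈ L, c.BasedAt b) :
    ((L.map Circuit.darts).flatten).IsChain (fun d d' => d.2.2 = d'.2.1) := by
  induction L with
  | nil => exact List.isChain_nil
  | cons c L' ih =>
    have hb' : ∀ c ∈ L', c.BasedAt b := fun c hc => hb c (List.mem_cons_of_mem _ hc)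
    refine List.IsChain.append c.chain (ih hb') fun x hx y hy => ?_
    have hL' : L' ≠ [] := by rintro rfl; simp at hy
    have hxb := (hb c List.mem_cons_self).getLast?_map_snd
    have hyb := head?_flatten_darts hL' hb'
    rw [Option.mem_def.mp hx] at hxb
    rw [Option.mem_def.mp hy] at hyb
    simp only [Option.map_some, Option.some.injEq] at hxb hyb
    rw [hxb, hyb]

def joinCircuits (L : List (Circuit ends)) (hL : L ≠ []) (hb : ∀ c ∈ L, c.BasedAt b)
    (hnd : (((L.map Circuit.darts).flatten).map Prod.fst).Nodup) : Circuit ends where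
  darts := (L.map Circuit.darts).flatten
  nonempty := flatten_darts_ne_nil hL
  valid d hd := by
    obtain ⟨_, hl, hdl⟩ := List.mem_flatten.mp hd
    obtain ⟨c, -, rfl⟩ := List.mem_map.mp hl
    exact c.valid d hdl
  chain := isChain_flatten_darts hb
  closed := by rw [head?_flatten_darts hL hb, getLast?_flatten_darts hL hb]
  edgesNodup := hnd

variable {L : List (Circuit ends)} {hL : L ≠ []} {hb : ∀ c ∈ L, c.BasedAt b}
  {hnd : (((L.map Circuit.darts).flatten).map Prod.fst).Nodup}

lemma joinCircuits_basedAt : (joinCircuits L hL hb hnd).BasedAt b :=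
  head?_flatten_darts hL hb

lemma joinCircuits_weight (γ : E → ZMod 2) :
    (joinCircuits L hL hb hnd).weight γ = (L.map (Circuit.weight γ)).sum := by
  simp only [joinCircuits, Circuit.weight, List.map_flatten, List.sum_flatten, List.map_map]
  rfl

lemma mem_joinCircuits_edges [DecidableEq E] {e : E} :
    e ∈ (joinCircuits L hL hb hnd).edges ↔ ∃ c ∈ L, e ∈ c.edges := by
  simp only [joinCircuits, Circuit.edges, List.mem_toFinset, List.mem_map, List.mem_flatten]
  constructor
  · rintro ⟨d, ⟨_, ⟨c, hc, rfl⟩, hdc⟩, rfl⟩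
    exact ⟨c, hc, d, hdc, rfl⟩
  · rintro ⟨c, hc, d, hdc, rfl⟩
    exact ⟨d, ⟨c.darts, ⟨c, hc, rfl⟩, hdc⟩, rfl⟩

end Join

section Merge

variable [DecidableEq E] {k : ℕ} {C : Fin k → Circuit ends}

lemma IsDecomposition.disjoint_darts (hC : IsDecomposition ends C) {i i' : Fin k}
    (hii' : i ≠ i') : ((C i).darts.map Prod.fst).Disjoint ((C i').darts.map Prod.fst) := by
  intro e he he'
  obtain ⟨_, -, huniq⟩ := hC e
  exact hii' <|
    (huniq i (List.mem_toFinset.mpr he)).trans (huniq i' (List.mem_toFinset.mpr he')).symm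

lemma IsDecomposition.nodup_flatten_darts (hC : IsDecomposition ends C) {l : List (Fin k)}
    (hl : l.Nodup) : ((((l.map C).map Circuit.darts).flatten).map Prod.fst).Nodup := by
  rw [List.map_flatten, List.map_map, List.map_map, List.nodup_flatten, List.pairwise_map]
  refine ⟨fun _ hl' => ?_, hl.imp hC.disjoint_darts⟩
  obtain ⟨i, -, rfl⟩ := List.mem_map.mp hl'
  exact (C i).edgesNodup

theorem IsDecomposition.exists_merge (hC : IsDecomposition ends C) (hb : ∀ i, (C i).BasedAt b)
    {m : ℕ} (f : Fin k → Fin m) (hf : Function.Surjective f) (γ : E → ZMod 2) :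
    ∃ D : Fin m → Circuit ends, IsDecomposition ends D ∧
      ∀ j, (D j).BasedAt b ∧ (D j).weight γ = ∑ i with f i = j, (C i).weight γ := by
  let fibre (j : Fin m) : List (Fin k) := (Finset.univ.filter (f · = j)).toList
  have hne (j : Fin m) : (fibre j).map C ≠ [] := by
    obtain ⟨i, rfl⟩ := hf j
    simp [fibre]
  have hbased (j : Fin m) : ∀ c ∈ (fibre j).map C, c.BasedAt b := by
    simp only [List.mem_map]
    rintro _ ⟨i, -, rfl⟩
    exact hb i
  let D (j : Fin m) : Circuit ends :=
    joinCircuits _ (hne j) (hbased j) (hC.nodup_flatten_darts (Finset.nodup_toList _))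
  have mem_D {e : E} {j : Fin m} : e ∈ (D j).edges ↔ ∃ i, f i = j ∧ e ∈ (C i).edges := by
    simp [D, fibre, mem_joinCircuits_edges]
  refine ⟨D, fun e => ?_, fun j => ⟨joinCircuits_basedAt, ?_⟩⟩
  · obtain ⟨i, hi, huniq⟩ := hC e
    refine ⟨f i, mem_D.mpr ⟨i, rfl, hi⟩, fun j hj => ?_⟩
    obtain ⟨i', rfl, hi'⟩ := mem_D.mp hj
    rw [huniq i' hi']
  · rw [joinCircuits_weight, List.map_map, Finset.sum_map_toList]
    rfl

end Merge

/-- The witness maps the `1`-entries of `w` bijectively onto its codomain and every `0`-entry to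
the image of a fixed `1`-entry. -/
lemma exists_surjective_sum_fibre_eq_one {ι : Type*} [Fintype ι] (w : ι → ZMod 2)
    (hpos : 0 < (Finset.univ.filter (w · = 1)).card) :
    ∃ f : ι → Fin (Finset.univ.filter (w · = 1)).card,
      Function.Surjective f ∧ ∀ j, ∑ i with f i = j, w i = 1 := by
  set S := Finset.univ.filter (w · = 1)
  obtain ⟨i₀, hi₀⟩ := Finset.card_pos.mp hpos
  let f (i : ι) : Fin S.card :=
    if h : i ∈ S then S.equivFin ⟨i, h⟩ else S.equivFin ⟨i₀, hi₀⟩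
  have hf_symm (j : Fin S.card) : f (S.equivFin.symm j) = j := by simp [f]
  refine ⟨f, fun j => ⟨_, hf_symm j⟩, fun j => ?_⟩
  rw [Finset.sum_eq_single (S.equivFin.symm j : ι)]
  · exact (Finset.mem_filter.mp (S.equivFin.symm j).2).2
  · intro i hi hne
    refine (by decide : ∀ x : ZMod 2, x ≠ 1 → x = 0) _ fun hw => hne ?_
    have hiS : i ∈ S := Finset.mem_filter.mpr ⟨Finset.mem_univ _, hw⟩
    simp only [Finset.mem_filter, Finset.mem_univ, true_and, f, dif_pos hiS] at hi
    simp [← hi]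
  · simp [hf_symm]

variable [Fintype V] [DecidableEq V] [Fintype E] [DecidableEq E]

theorem optimal_flooding_to_decomposition_general (ends : E → Sym2 V) (γ : E → ZMod 2) (b : V)
    {k : ℕ} (C : Fin k → Circuit ends)
    (hopt : IsOptimalFlooding ends γ b C)
    (hpos : 0 < nonzeroCount ends γ C) :
    ∃ D : Fin (nonzeroCount ends γ C) → Circuit ends,
      IsDecomposition ends D ∧ ∀ i, (D i).weight γ = 1 ∧ (D i).Hits b := by
  obtain ⟨⟨-, hdec, hbased⟩, -⟩ := hopt
  obtain ⟨f, hf, hfibre⟩ := exists_surjective_sum_fibre_eq_one (fun i => (C i).weight γ) hpos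
  obtain ⟨D, hD, hDb⟩ := hdec.exists_merge hbased f hf γ
  exact ⟨D, hD, fun j => ⟨(hDb j).2.trans (hfibre j), (hDb j).1.hits⟩⟩

/-- from an optimal flooding with at least one non-zero circuit one gets
a decomposition into non-zero circuits hitting `b`, of size the number of non-zero
circuits in the flooding. -/
theorem optimal_flooding_to_decomposition (ends : E → Sym2 V) (γ : E → ZMod 2) (b : V)
    (hE : IsEulerian ends) {k : ℕ} (C : Fin k → Circuit ends)
    (hopt : IsOptimalFlooding ends γ b C)
    (hpos : 0 < nonzeroCount ends γ C) :
    ∃ D : Fin (nonzeroCount ends γ C) → Circuit ends,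
      IsDecomposition ends D ∧ ∀ i, (D i).weight γ = 1 ∧ (D i).Hits b :=
  optimal_flooding_to_decomposition_general ends γ b C hopt hpos

end SignedFlood
end

section
/- Let (G, γ, b) be an RES-graph and let T₀, S₀, T₁, S₁ be trails such that (T₀, S₀) and (T₁, S₁) are edge-disjoint circuits with b as tail and head, each of weight zero, with γ(T₀) = 0, γ(T₁) = 1, and T₀ and T₁ having the same head vertex. Then the circuits (T₀, T₁⁻¹) and (S₀⁻¹, S₁) are both non-zero and together use exactly the same edge set as (T₀, S₀) and (T₁, S₁). -/
open scoped Classical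

namespace SignedFlood

variable {V E : Type} [Fintype V] [DecidableEq V] [Fintype E] [DecidableEq E]

/-- A trail: a walk with no repeated edges. -/
structure Trail {V E : Type} (ends : E → Sym2 V) where
  darts : List (E × V × V)
  nonempty : darts ≠ []
  valid : ∀ d ∈ darts, ends d.1 = s(d.2.1, d.2.2)
  chain : darts.Chain' (fun d d' => d.2.2 = d'.2.1)
  edgesNodup : (darts.map Prod.fst).Nodup

/-- The weight of a trail. -/
def Trail.weight {ends : E → Sym2 V} (γ : E → ZMod 2) (T : Trail ends) : ZMod 2 :=
  ((T.darts.map Prod.fst).map γ).sum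

/-- Reverse a list of darts. -/
def revDarts (l : List (E × V × V)) : List (E × V × V) :=
  (l.map (fun d => (d.1, d.2.2, d.2.1))).reverse


/-!
Write `v` for the common head of `T₀` and `T₁`. Since `(T₀, S₀)` and `(T₁, S₁)` are closed trails
from `b`, the trails `T₀, T₁` run from `b` to `v` and `S₀, S₁` from `v` to `b`; so `(T₀, T₁⁻¹)` and
`(S₀⁻¹, S₁)` are closed, and they are trails because the four trails are pairwise edge-disjoint.
Both original circuits have weight zero, so `γ(S₀) = γ(T₀) = 0` and `γ(S₁) = γ(T₁) = 1`, whence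
`γ(T₀) + γ(T₁) = γ(S₀) + γ(S₁) = 1`.
-/

section Trails

variable {V E : Type} {ends : E → Sym2 V}

def tailVertex (l : List (E × V × V)) : Option V := l.head?.map (·.2.1)

def headVertex (l : List (E × V × V)) : Option V := l.getLast?.map (·.2.2)

lemma tailVertex_append {l : List (E × V × V)} (hl : l ≠ []) (l' : List (E × V × V)) :
    tailVertex (l ++ l') = tailVertex l := by
  obtain ⟨d, l, rfl⟩ := List.exists_cons_of_ne_nil hl
  rfl

lemma headVertex_append (l : List (E × V × V)) {l' : List (E × V × V)} (hl' : l' ≠ []) :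
    headVertex (l ++ l') = headVertex l' := by
  obtain ⟨l', d, rfl⟩ := l'.eq_nil_or_concat'.resolve_left hl'
  simp [headVertex, ← List.append_assoc]

lemma tailVertex_revDarts (l : List (E × V × V)) : tailVertex (revDarts l) = headVertex l := by
  simp [tailVertex, headVertex, revDarts, List.head?_reverse, List.getLast?_map, Function.comp_def]

lemma headVertex_revDarts (l : List (E × V × V)) : headVertex (revDarts l) = tailVertex l := by
  simp [tailVertex, headVertex, revDarts, List.getLast?_reverse, List.head?_map, Function.comp_def]

lemma revDarts_map_fst (l : List (E × V × V)) :
    (revDarts l).map Prod.fst = (l.map Prod.fst).reverse := by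
  simp [revDarts, List.map_reverse, Function.comp_def]

lemma isChain_darts_append_iff {l l' : List (E × V × V)} (hl : l ≠ []) (hl' : l' ≠ []) :
    (l ++ l').IsChain (fun d d' => d.2.2 = d'.2.1) ↔
      l.IsChain (fun d d' => d.2.2 = d'.2.1) ∧ l'.IsChain (fun d d' => d.2.2 = d'.2.1) ∧
        headVertex l = tailVertex l' := by
  obtain ⟨l, x, rfl⟩ := l.eq_nil_or_concat'.resolve_left hl
  obtain ⟨y, l', rfl⟩ := List.exists_cons_of_ne_nil hl'
  simp only [List.isChain_append, headVertex, tailVertex, List.getLast?_concat, List.head?_cons,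
    Option.map_some, Option.mem_def, Option.some_inj, forall_eq']

namespace Trail

def reverse (T : Trail ends) : Trail ends where
  darts := revDarts T.darts
  nonempty := by simp [revDarts, T.nonempty]
  valid := by
    simp only [revDarts, List.mem_reverse, List.mem_map, forall_exists_index, and_imp]
    rintro _ d hd rfl
    rw [T.valid d hd, Sym2.eq_swap]
  chain := by
    change List.IsChain _ _
    rw [revDarts, List.isChain_reverse, List.isChain_map]
    exact T.chain.imp fun _ _ h => h.symm
  edgesNodup := by simpa [revDarts_map_fst] using T.edgesNodup

@[simp]
lemma weight_reverse (γ : E → ZMod 2) (T : Trail ends) : T.reverse.weight γ = T.weight γ := by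
  simp [weight, reverse, revDarts_map_fst, List.map_reverse, List.sum_reverse]

@[simp]
lemma reverse_darts (T : Trail ends) : T.reverse.darts = revDarts T.darts := rfl

variable [DecidableEq E]

def edges (T : Trail ends) : Finset E := (T.darts.map Prod.fst).toFinset

@[simp]
lemma edges_reverse (T : Trail ends) : T.reverse.edges = T.edges := by
  simp [edges, reverse, revDarts_map_fst]

lemma disjoint_edges_of_nodup_append {P Q R S : Trail ends}
    (h : ((P.darts ++ Q.darts ++ R.darts ++ S.darts).map Prod.fst).Nodup) :
    Disjoint P.edges R.edges ∧ Disjoint Q.edges S.edges ∧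
      Disjoint (P.edges ∪ R.edges) (Q.edges ∪ S.edges) := by
  replace h : ((P.darts.map Prod.fst ++ R.darts.map Prod.fst) ++
      (Q.darts.map Prod.fst ++ S.darts.map Prod.fst)).Nodup := by
    rw [List.append_assoc]
    refine ((List.perm_append_comm_assoc _ _ _).append_left _).nodup_iff.mp ?_
    simpa only [List.map_append, List.append_assoc] using h
  simp only [List.nodup_append', ← List.disjoint_toFinset_iff_disjoint,
    List.toFinset_append] at h
  exact ⟨h.1.2.2, h.2.1.2.2, h.2.2⟩

end Trail

namespace Circuit

variable {C : Circuit ends} {P Q : Trail ends}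

lemma headVertex_eq_tailVertex_of_darts_eq_append (hC : C.darts = P.darts ++ Q.darts) :
    headVertex P.darts = tailVertex Q.darts ∧ headVertex Q.darts = tailVertex P.darts := by
  have hchain : C.darts.IsChain (fun d d' => d.2.2 = d'.2.1) := C.chain
  have hclosed : tailVertex C.darts = headVertex C.darts := C.closed
  rw [hC, isChain_darts_append_iff P.nonempty Q.nonempty] at hchain
  rw [hC, tailVertex_append P.nonempty, headVertex_append _ Q.nonempty] at hclosed
  exact ⟨hchain.2.2, hclosed.symm⟩

lemma basedAt_iff_of_darts_eq_append {b : V} (hC : C.darts = P.darts ++ Q.darts) :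
    C.BasedAt b ↔ tailVertex P.darts = some b := by
  rw [BasedAt, hC, ← tailVertex, tailVertex_append P.nonempty]

lemma weight_of_darts_eq_append (γ : E → ZMod 2) (hC : C.darts = P.darts ++ Q.darts) :
    C.weight γ = P.weight γ + Q.weight γ := by
  simp [weight, Trail.weight, hC]

variable [DecidableEq E]

def ofTrails (P Q : Trail ends) (hPQ : headVertex P.darts = tailVertex Q.darts)
    (hQP : headVertex Q.darts = tailVertex P.darts) (hdisj : Disjoint P.edges Q.edges) :
    Circuit ends where
  darts := P.darts ++ Q.darts
  nonempty := by simp [P.nonempty]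
  valid d hd := (List.mem_append.mp hd).elim (P.valid d) (Q.valid d)
  chain := (isChain_darts_append_iff P.nonempty Q.nonempty).mpr ⟨P.chain, Q.chain, hPQ⟩
  closed := by
    change tailVertex _ = headVertex _
    rw [tailVertex_append P.nonempty, headVertex_append _ Q.nonempty, hQP]
  edgesNodup := by
    rw [List.map_append, List.nodup_append']
    exact ⟨P.edgesNodup, Q.edgesNodup, List.disjoint_toFinset_iff_disjoint.mp hdisj⟩

lemma edges_of_darts_eq_append (hC : C.darts = P.darts ++ Q.darts) :
    C.edges = P.edges ∪ Q.edges := by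
  simp [edges, Trail.edges, hC, List.toFinset_append]

end Circuit

end Trails

/-- the exchange at the common head of `T₀` and `T₁`: the circuits
`(T₀, T₁⁻¹)` and `(S₀⁻¹, S₁)` are non-zero and use the same edges as
`(T₀, S₀)` and `(T₁, S₁)`. -/
theorem exchange_nonzero (ends : E → Sym2 V) (γ : E → ZMod 2) (b : V)
    (T0 S0 T1 S1 : Trail ends)
    (hdisj : ((T0.darts ++ S0.darts ++ T1.darts ++ S1.darts).map Prod.fst).Nodup)
    (hC0 : ∃ C : Circuit ends, C.darts = T0.darts ++ S0.darts ∧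
      C.BasedAt b ∧ C.weight γ = 0)
    (hC1 : ∃ C : Circuit ends, C.darts = T1.darts ++ S1.darts ∧
      C.BasedAt b ∧ C.weight γ = 0)
    (hhead : (T0.darts.getLast?).map (fun d => d.2.2) =
      (T1.darts.getLast?).map (fun d => d.2.2))
    (hw0 : T0.weight γ = 0) (hw1 : T1.weight γ = 1) :
    ∃ (C1 C2 : Circuit ends),
      C1.darts = T0.darts ++ revDarts T1.darts ∧
      C2.darts = revDarts S0.darts ++ S1.darts ∧
      C1.weight γ = 1 ∧ C2.weight γ = 1 ∧
      Disjoint C1.edges C2.edges ∧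
      C1.edges ∪ C2.edges =
        ((T0.darts ++ S0.darts ++ T1.darts ++ S1.darts).map Prod.fst).toFinset := by
  obtain ⟨C0, hC0, hC0b, hC0w⟩ := hC0
  obtain ⟨C1, hC1, hC1b, hC1w⟩ := hC1
  obtain ⟨hT0S0, hS0T0⟩ := C0.headVertex_eq_tailVertex_of_darts_eq_append hC0
  obtain ⟨hT1S1, hS1T1⟩ := C1.headVertex_eq_tailVertex_of_darts_eq_append hC1
  rw [C0.basedAt_iff_of_darts_eq_append hC0] at hC0b
  rw [C1.basedAt_iff_of_darts_eq_append hC1] at hC1b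
  have hwS0 : S0.weight γ = 0 := by
    rwa [C0.weight_of_darts_eq_append γ hC0, hw0, zero_add] at hC0w
  have hwS1 : S1.weight γ = 1 := by
    rw [C1.weight_of_darts_eq_append γ hC1, hw1] at hC1w
    grind
  replace hhead : headVertex T0.darts = headVertex T1.darts := hhead
  obtain ⟨hT0T1, hS0S1, hTS⟩ := Trail.disjoint_edges_of_nodup_append hdisj
  refine ⟨Circuit.ofTrails T0 T1.reverse ?_ ?_ (by simpa using hT0T1),
    Circuit.ofTrails S0.reverse S1 ?_ ?_ (by simpa using hS0S1), rfl, rfl, ?_, ?_, ?_, ?_⟩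
  · rw [Trail.reverse_darts, tailVertex_revDarts, hhead]
  · rw [Trail.reverse_darts, headVertex_revDarts, hC1b, hC0b]
  · rw [Trail.reverse_darts, headVertex_revDarts, ← hT0S0, hhead, hT1S1]
  · rw [Trail.reverse_darts, tailVertex_revDarts, hS1T1, hC1b, hS0T0, hC0b]
  · rw [Circuit.weight_of_darts_eq_append γ rfl, Trail.weight_reverse, hw0, hw1, zero_add]
  · rw [Circuit.weight_of_darts_eq_append γ rfl, Trail.weight_reverse, hwS0, hwS1, zero_add]
  · rwa [Circuit.edges_of_darts_eq_append rfl, Circuit.edges_of_darts_eq_append rfl,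
      Trail.edges_reverse, Trail.edges_reverse]
  · rw [Circuit.edges_of_darts_eq_append rfl, Circuit.edges_of_darts_eq_append rfl,
      Trail.edges_reverse, Trail.edges_reverse]
    simp only [Trail.edges, List.map_append, List.toFinset_append]
    ac_rfl

end SignedFlood
end
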